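/- arXiv:2604.07480 — 2 statements merged into one kernel-verified Lean document; each statement's English description precedes it below -/
import Mathlib

section
/- Sufficient Depth (Proposition 1, solution form). Let S, U, Û, A be finite types with card U ≤ u_max and card Û ≤ u_max, let R : S → S → Prop, let D be the ground-truth DFA with alphabet S, node type U and start node u_I, let π : S → U → A → ℝ be a product policy with induced history policy π_h, and let D̂ be a candidate DFA with alphabet S, node type Û and start node û_I. Set l* = card S * u_max * u_max. If D̂ is consistent at depth l* (i.e., for every negative example (τ, τ') of R-chain trajectories with τ.length ≤ l* and τ'.length ≤ l*, D̂.eval τ ≠ D̂.eval τ'), then D̂ is consistent at depth l for every natural number l (in particular for every l > l*). -/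
/-- The history policy induced by a product policy `π` and a labeled reward machine
model (DFA) `D` with start node `uI`: `π_h(a | s, τ) = π s (D.evalFrom uI τ) a`. -/
def historyPolicy {S U A : Type*} (D : DFA S U) (uI : U) (π : S → U → A → ℝ)
    (a : A) (s : S) (τ : List S) : ℝ :=
  π s (D.evalFrom uI τ) a

/-- A pair of feasible (R-chain) trajectories is a negative example for the history
policy `πh` if `πh` differs on them at some state-action pair. -/
def NegativeExample {S A : Type*} (R : S → S → Prop) (πh : A → S → List S → ℝ)
    (τ τ' : List S) : Prop :=
  List.Chain' R τ ∧ List.Chain' R τ' ∧ ∃ (s : S) (a : A), πh a s τ ≠ πh a s τ'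

/-- A candidate DFA `Dhat` with start node `uIhat` is consistent at depth `l` if every
negative example of length at most `l` leads to distinct nodes of `Dhat`. -/
def ConsistentAtDepth {S A Uhat : Type*} (R : S → S → Prop) (πh : A → S → List S → ℝ)
    (Dhat : DFA S Uhat) (uIhat : Uhat) (l : ℕ) : Prop :=
  ∀ τ τ' : List S, NegativeExample R πh τ τ' → τ.length ≤ l → τ'.length ≤ l →
    Dhat.evalFrom uIhat τ ≠ Dhat.evalFrom uIhat τ'

lemma shorten_core {S U Uhat : Type*} (R : S → S → Prop)
    (D : DFA S U) (uI : U) (Dhat : DFA S Uhat) (uIhat : Uhat)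
    (τ : List S) (hchain : List.Chain' R τ) (i j : Fin τ.length)
    (hlt : (i : ℕ) < (j : ℕ))
    (hs : τ.get i = τ.get j)
    (hD : D.evalFrom uI (τ.take (i + 1)) = D.evalFrom uI (τ.take (j + 1)))
    (hDhat : Dhat.evalFrom uIhat (τ.take (i + 1)) = Dhat.evalFrom uIhat (τ.take (j + 1))) :
    ∃ τ₂ : List S, List.Chain' R τ₂ ∧ τ₂.length < τ.length ∧
      D.evalFrom uI τ₂ = D.evalFrom uI τ ∧
      Dhat.evalFrom uIhat τ₂ = Dhat.evalFrom uIhat τ := by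
  have hi : (i : ℕ) < τ.length := i.isLt
  have hj : (j : ℕ) < τ.length := j.isLt
  refine ⟨τ.take (i + 1) ++ τ.drop (j + 1), ?_, ?_, ?_, ?_⟩
  · show List.IsChain R _
    rw [List.isChain_append]
    refine ⟨hchain.take _, hchain.drop _, ?_⟩
    intro x hx y hy
    rw [List.getLast?_take] at hx
    simp only [Nat.add_sub_cancel, Nat.add_eq_zero, one_ne_zero, and_false,
      if_false] at hx
    rw [List.getElem?_eq_getElem hi, Option.some_or, Option.mem_some_iff] at hx
    rw [List.head?_drop] at hy
    have hjy : (j : ℕ) + 1 < τ.length := by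
      by_contra h
      rw [List.getElem?_eq_none (by omega)] at hy
      exact Option.not_mem_none y hy
    rw [List.getElem?_eq_getElem hjy, Option.mem_some_iff] at hy
    have := List.isChain_iff_getElem.mp hchain (j : ℕ) (by omega)
    subst hx; subst hy
    simp only [List.get_eq_getElem] at hs this
    rw [hs]
    exact this
  · have h1 : (τ.take ((i : ℕ) + 1)).length = (i : ℕ) + 1 := by
      rw [List.length_take]; omega
    have h2 : (τ.drop ((j : ℕ) + 1)).length = τ.length - ((j : ℕ) + 1) :=
      List.length_drop
    rw [List.length_append, h1, h2]; omega
  · rw [DFA.evalFrom_of_append, hD, ← DFA.evalFrom_of_append,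
      List.take_append_drop]
  · rw [DFA.evalFrom_of_append, hDhat, ← DFA.evalFrom_of_append,
      List.take_append_drop]

lemma shorten {S U Uhat : Type*} [Fintype S] [Fintype U] [Fintype Uhat]
    (R : S → S → Prop) (D : DFA S U) (uI : U) (Dhat : DFA S Uhat) (uIhat : Uhat)
    (τ : List S) (hchain : List.Chain' R τ)
    (hlen : Fintype.card S * Fintype.card U * Fintype.card Uhat < τ.length) :
    ∃ τ₂ : List S, List.Chain' R τ₂ ∧ τ₂.length < τ.length ∧
      D.evalFrom uI τ₂ = D.evalFrom uI τ ∧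
      Dhat.evalFrom uIhat τ₂ = Dhat.evalFrom uIhat τ := by
  obtain ⟨i, j, hij, hfeq⟩ := Fintype.exists_ne_map_eq_of_card_lt
    (fun k : Fin τ.length =>
      (τ.get k, D.evalFrom uI (τ.take (k + 1)), Dhat.evalFrom uIhat (τ.take (k + 1))))
    (by simpa [mul_assoc] using hlen)
  simp only [Prod.mk.injEq] at hfeq
  obtain ⟨hs, hD, hDhat⟩ := hfeq
  rcases (Fin.val_ne_of_ne hij).lt_or_gt with h | h
  · exact shorten_core R D uI Dhat uIhat τ hchain i j h hs hD hDhat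
  · exact shorten_core R D uI Dhat uIhat τ hchain j i h hs.symm hD.symm hDhat.symm

/-- Proposition 1 (Sufficient Depth), solution form: if a candidate labeled reward
machine model is consistent at depth `l* = |S| * u_max * u_max`, then it is consistent
at every depth `l`. -/
theorem sufficient_depth_solution_form {S U Uhat A : Type*}
    [Fintype S] [Fintype U] [Fintype Uhat] (u_max : ℕ)
    (hU : Fintype.card U ≤ u_max) (hUhat : Fintype.card Uhat ≤ u_max)
    (R : S → S → Prop) (D : DFA S U) (uI : U) (π : S → U → A → ℝ)
    (Dhat : DFA S Uhat) (uIhat : Uhat)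
    (hcons : ConsistentAtDepth R (historyPolicy D uI π) Dhat uIhat
      (Fintype.card S * u_max * u_max)) :
    ∀ l : ℕ, ConsistentAtDepth R (historyPolicy D uI π) Dhat uIhat l := by
  have key : ∀ n (τ τ' : List S), τ.length + τ'.length ≤ n →
      NegativeExample R (historyPolicy D uI π) τ τ' →
      Dhat.evalFrom uIhat τ ≠ Dhat.evalFrom uIhat τ' := by
    intro n
    induction n with
    | zero =>
      intro τ τ' hn hneg
      exact hcons τ τ' hneg (by omega) (by omega)
    | succ n ih =>
      intro τ τ' hn hneg
      obtain ⟨hc, hc', s, a, hne⟩ := hneg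
      have hcard : Fintype.card S * Fintype.card U * Fintype.card Uhat ≤
          Fintype.card S * u_max * u_max :=
        Nat.mul_le_mul (Nat.mul_le_mul le_rfl hU) hUhat
      by_cases h1 : τ.length ≤ Fintype.card S * u_max * u_max
      · by_cases h2 : τ'.length ≤ Fintype.card S * u_max * u_max
        · exact hcons τ τ' ⟨hc, hc', s, a, hne⟩ h1 h2
        · obtain ⟨τ₂, hc₂, hlen₂, hD₂, hDhat₂⟩ :=
            shorten R D uI Dhat uIhat τ' hc' (by omega)
          have hne₂ : historyPolicy D uI π a s τ ≠ historyPolicy D uI π a s τ₂ := by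
            simpa [historyPolicy, hD₂] using hne
          have := ih τ τ₂ (by omega) ⟨hc, hc₂, s, a, hne₂⟩
          rwa [hDhat₂] at this
      · obtain ⟨τ₂, hc₂, hlen₂, hD₂, hDhat₂⟩ :=
          shorten R D uI Dhat uIhat τ hc (by omega)
        have hne₂ : historyPolicy D uI π a s τ₂ ≠ historyPolicy D uI π a s τ' := by
          simpa [historyPolicy, hD₂] using hne
        have := ih τ₂ τ' (by omega) ⟨hc₂, hc', s, a, hne₂⟩
        rwa [hDhat₂] at this
  intro l τ τ' hneg _ _
  exact key (τ.length + τ'.length) τ τ' le_rfl hneg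
end

section
/- Trajectory shortening lemma (core of the proof of Proposition 1). Let S be a finite type, R : S → S → Prop a relation, and D₁, D₂ DFAs with alphabet S, finite state types U₁, U₂, and start states q₁, q₂. For every list τ : List S with List.Chain' R τ, there exists a list τ̄ : List S with List.Chain' R τ̄ such that: τ̄.length ≤ card S * card U₁ * card U₂; τ̄ has the same head and the same last element as τ (τ̄.head? = τ.head? and τ̄.getLast? = τ.getLast?); D₁.evalFrom q₁ τ̄ = D₁.evalFrom q₁ τ; and D₂.evalFrom q₂ τ̄ = D₂.evalFrom q₂ τ. -/
lemma cut_cycle {S U₁ U₂ : Type*} (R : S → S → Prop)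
    (D₁ : DFA S U₁) (D₂ : DFA S U₂) (q₁ : U₁) (q₂ : U₂)
    (τ : List S) (hτ : List.Chain' R τ) (i j : ℕ) (hij : i < j) (hj : j < τ.length)
    (hel : τ[i]'(lt_trans hij hj) = τ[j]'hj)
    (he1 : D₁.evalFrom q₁ (τ.take i) = D₁.evalFrom q₁ (τ.take j))
    (he2 : D₂.evalFrom q₂ (τ.take i) = D₂.evalFrom q₂ (τ.take j)) :
    ∃ τ' : List S, List.Chain' R τ' ∧ τ'.length < τ.length ∧
      τ'.head? = τ.head? ∧ τ'.getLast? = τ.getLast? ∧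
      D₁.evalFrom q₁ τ' = D₁.evalFrom q₁ τ ∧
      D₂.evalFrom q₂ τ' = D₂.evalFrom q₂ τ := by
  have hi : i < τ.length := lt_trans hij hj
  refine ⟨τ.take i ++ τ.drop j, ?_, ?_, ?_, ?_, ?_, ?_⟩
  · refine List.IsChain.append (hτ.take i) (hτ.drop j) ?_
    intro x hx y hy
    rw [List.getLast?_eq_getElem?, List.getElem?_take] at hx
    rw [List.head?_drop] at hy
    have hlt : (τ.take i).length = i := by rw [List.length_take]; omega
    rw [hlt] at hx
    rcases Nat.eq_zero_or_pos i with h0 | h0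
    · simp [h0] at hx
    · have h1 : i - 1 < i := Nat.sub_lt h0 one_pos
      rw [if_pos h1, List.getElem?_eq_getElem (lt_trans h1 hi)] at hx
      rw [List.getElem?_eq_getElem hj] at hy
      obtain rfl : x = τ[i-1] := by simpa using hx.symm
      obtain rfl : y = τ[j] := by simpa using hy.symm
      rw [← hel]
      have := List.isChain_iff_getElem.mp hτ (i-1) (by omega)
      simpa [List.get_eq_getElem, Nat.sub_add_cancel h0] using this
  · rw [List.length_append, (by rw [List.length_take]; omega : (τ.take i).length = i), List.length_drop]; omega
  · rcases Nat.eq_zero_or_pos i with h0 | h0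
    · subst h0
      simp only [List.take_zero, List.nil_append, List.head?_drop]
      rw [List.head?_eq_getElem?, List.getElem?_eq_getElem hj,
        List.getElem?_eq_getElem hi, ← hel]
    · rw [List.head?_append, List.head?_eq_getElem? (l := τ.take i), List.getElem?_take,
        if_pos h0, List.getElem?_eq_getElem (show 0 < τ.length by omega)]
      simp [Option.or, List.head?_eq_getElem?,
        List.getElem?_eq_getElem (show 0 < τ.length by omega)]
  · have hd : τ.drop j ≠ [] := by
      simp [← List.length_pos_iff_ne_nil, List.length_drop]; omega
    rw [List.getLast?_append_of_ne_nil _ hd, List.getLast?_eq_getElem?,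
      List.getLast?_eq_getElem?, List.length_drop, List.getElem?_drop]
    congr 1
    omega
  · conv_rhs => rw [← List.take_append_drop j τ]
    simp only [DFA.evalFrom] at he1 ⊢
    rw [List.foldl_append, List.foldl_append, he1]
  · conv_rhs => rw [← List.take_append_drop j τ]
    simp only [DFA.evalFrom] at he2 ⊢
    rw [List.foldl_append, List.foldl_append, he2]

/-- Trajectory shortening lemma (core of the proof of Proposition 1): every feasible
trajectory can be shortened, by repeatedly removing cycles in the product of the MDP
with the synchronized automaton, to a feasible trajectory of length at most the number
of product states, with the same head and last element, reaching the same nodes in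
both automata. -/
theorem trajectory_shortening {S U₁ U₂ : Type*}
    [Fintype S] [Fintype U₁] [Fintype U₂] (R : S → S → Prop)
    (D₁ : DFA S U₁) (D₂ : DFA S U₂) (q₁ : U₁) (q₂ : U₂)
    (τ : List S) (hτ : List.Chain' R τ) :
    ∃ τbar : List S, List.Chain' R τbar ∧
      τbar.length ≤ Fintype.card S * Fintype.card U₁ * Fintype.card U₂ ∧
      τbar.head? = τ.head? ∧ τbar.getLast? = τ.getLast? ∧
      D₁.evalFrom q₁ τbar = D₁.evalFrom q₁ τ ∧
      D₂.evalFrom q₂ τbar = D₂.evalFrom q₂ τ := by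
  generalize hn : τ.length = n
  induction n using Nat.strong_induction_on generalizing τ with
  | _ n ih =>
  subst hn
  by_cases h : τ.length ≤ Fintype.card S * Fintype.card U₁ * Fintype.card U₂
  · exact ⟨τ, hτ, h, rfl, rfl, rfl, rfl⟩
  · push_neg at h
    have hcard : Fintype.card (S × U₁ × U₂) < Fintype.card (Fin τ.length) := by
      simp only [Fintype.card_prod, Fintype.card_fin]
      rw [← mul_assoc]; exact h
    obtain ⟨a, b, hne, hg⟩ := Fintype.exists_ne_map_eq_of_card_lt
      (fun k : Fin τ.length =>
        (τ.get k, D₁.evalFrom q₁ (τ.take k), D₂.evalFrom q₂ (τ.take k))) hcard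
    simp only [Prod.mk.injEq] at hg
    have key : ∀ (i j : Fin τ.length), (i:ℕ) < (j:ℕ) →
        τ.get i = τ.get j →
        D₁.evalFrom q₁ (τ.take i) = D₁.evalFrom q₁ (τ.take j) →
        D₂.evalFrom q₂ (τ.take i) = D₂.evalFrom q₂ (τ.take j) →
        ∃ τbar : List S, List.Chain' R τbar ∧
          τbar.length ≤ Fintype.card S * Fintype.card U₁ * Fintype.card U₂ ∧
          τbar.head? = τ.head? ∧ τbar.getLast? = τ.getLast? ∧
          D₁.evalFrom q₁ τbar = D₁.evalFrom q₁ τ ∧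
          D₂.evalFrom q₂ τbar = D₂.evalFrom q₂ τ := by
      intro i j hij hel he1 he2
      obtain ⟨τ', hc', hlen', hh', hl', hev1', hev2'⟩ :=
        cut_cycle R D₁ D₂ q₁ q₂ τ hτ i j hij j.isLt (by simpa using hel) he1 he2
      obtain ⟨τbar, h1, h2, h3, h4, h5, h6⟩ := ih τ'.length hlen' τ' hc' rfl
      exact ⟨τbar, h1, h2, h3.trans hh', h4.trans hl', h5.trans hev1', h6.trans hev2'⟩
    rcases hne.lt_or_gt with hab | hab
    · exact key a b hab hg.1 hg.2.1 hg.2.2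
    · exact key b a hab hg.1.symm hg.2.1.symm hg.2.2.symm
end
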